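/- Let c, d be small categories, let m be a monad on c ⥤ Type whose underlying endofunctor is familial, and let p : (c ⥤ Type) ⥤ (d ⥤ Type) be a familial functor with positions p(1) and arities p[I]. Define L : (d ⥤ Type) ⥤ (d ⥤ Type) to be the familial functor with positions p(1) and with arity at a position I given by the d-copresheaf p(m(p[I])), i.e. L(Y)(D) ≅ Σ_{I ∈ p(1)(D)} Hom_{d ⥤ Type}(p(m(p[I])), Y); this is the right coclosure ⌈p / p ∘ m⌉ (the left Kan extension of p along the composite of m followed by p). Then L admits the structure of a comonad on d ⥤ Type, whose counit corresponds, under the coclosure bijection Nat(L, Id) ≅ Nat(p, (m ⋙ p) ⋙ Id) = Nat(p, m ⋙ p), to the natural transformation p ⟶ m ⋙ p obtained by whiskering the unit of m with p, and whose comultiplication is similarly induced by the multiplication of m via the coclosure universal property. -/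

import Mathlib

/-!
The coclosure `⌈p / m ⋙ p⌉` is a left Kan extension of `p` along `m ⋙ p`: a transformation out
of a familial functor is freely determined by its values on the generic elements `(I, 𝟙)`, and
the unit of the coclosure sends generic elements to generic elements.

Any left Kan extension `K` of `p` along `m ⋙ p` is a comonad. Its counit is induced by
`p η : p ⟶ m ⋙ p` and its comultiplication by the composite
`p ⟶ (m ⋙ p) ⋙ K ⟶ (m ⋙ m ⋙ p) ⋙ K ⋙ K ⟶ (m ⋙ p) ⋙ K ⋙ K` (the unit twice, then `p μ`).
Every comonad law is an equation between transformations out of `K`, so it suffices to check it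
after precomposing with the unit, where it reduces to a unit law or the associativity law of `m`.
-/
namespace Fam
open CategoryTheory Opposite Limits
private lemma sigmaExt {α : Type} {β : α → Type} {a a' : α} {b : β a} {b' : β a'}
    (h : a = a') (h' : HEq b b') : (⟨a, b⟩ : Σ x, β x) = ⟨a', b'⟩ := by
  subst h; cases h'; rfl
variable {c d : Type} [SmallCategory c] [SmallCategory d]
def elHom (pos : c ⥤ Type) {C C' : c} (f : C ⟶ C') (I : pos.obj C) :
    pos.elementsMk C I ⟶ pos.elementsMk C' (pos.map f I) :=
  CategoryOfElements.homMk _ _ f rfl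
lemma eqToHom_val {pos : c ⥤ Type} {x y : pos.Elements} (E : x = y) :
    (eqToHom E).val = eqToHom (congrArg Sigma.fst E) := by
  subst E; simp
@[simps]
def famApply (pos : c ⥤ Type) (ar : pos.Elementsᵒᵖ ⥤ d ⥤ Type) :
    (d ⥤ Type) ⥤ c ⥤ Type where
  obj X :=
    { obj := fun C => Σ I : pos.obj C, ar.obj (op (pos.elementsMk C I)) ⟶ X
      map := fun {C C'} f => TypeCat.ofHom fun x => ⟨pos.map f x.1, ar.map (elHom pos f x.1).op ≫ x.2⟩
      map_id := by
        intro C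
        apply ConcreteCategory.hom_ext; intro x
        obtain ⟨I, g⟩ := x
        have h : pos.map (𝟙 C) I = I := by simp
        have hE : pos.elementsMk C I = pos.elementsMk C (pos.map (𝟙 C) I) := by rw [h]
        have he : elHom pos (𝟙 C) I = eqToHom hE := by
          apply CategoryOfElements.ext
          rw [eqToHom_val]
          simp [elHom]
        dsimp
        refine sigmaExt h ?_
        rw [he]
        simp [eqToHom_op, eqToHom_map]
      map_comp := by
        intro C C' C'' f g
        apply ConcreteCategory.hom_ext; intro x
        obtain ⟨I, u⟩ := x
        have h : pos.map (f ≫ g) I = pos.map g (pos.map f I) := by simp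
        have hE : pos.elementsMk C'' (pos.map (f ≫ g) I)
            = pos.elementsMk C'' (pos.map g (pos.map f I)) := by rw [h]
        have hcomp : elHom pos f I ≫ elHom pos g (pos.map f I)
            = elHom pos (f ≫ g) I ≫ eqToHom hE := by
          apply CategoryOfElements.ext
          rw [CategoryOfElements.comp_val, CategoryOfElements.comp_val, eqToHom_val]
          simp [elHom]
        dsimp
        refine sigmaExt h ?_
        rw [← Category.assoc, ← ar.map_comp, ← op_comp, hcomp, op_comp, ar.map_comp,
          Category.assoc]
        simp [eqToHom_op, eqToHom_map] }
  map {X Y} t :=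
    { app := fun C => TypeCat.ofHom fun x => ⟨x.1, x.2 ≫ t⟩
      naturality := by
        intro C C' f
        apply ConcreteCategory.hom_ext; intro x
        simp only [types_comp_apply, TypeCat.ofHom_apply]
        rw [Category.assoc] }
  map_id := by
    intro X
    apply NatTrans.ext
    funext C; apply ConcreteCategory.hom_ext; intro x
    simp only [TypeCat.ofHom_apply, types_id_apply, NatTrans.id_app]
    rw [Category.comp_id]
  map_comp := by
    intro X Y Z s t
    apply NatTrans.ext
    funext C; apply ConcreteCategory.hom_ext; intro x
    simp only [types_comp_apply, TypeCat.ofHom_apply, NatTrans.comp_app]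
    rw [Category.assoc]

/-- The unit exhibiting `famApply pos (ar ⋙ G)` as the right coclosure `⌈F/G⌉`,
i.e. the left Kan extension of the familial functor `F = famApply pos ar` along `G`. -/
def coclosureUnit {e : Type} [SmallCategory e] (pos : c ⥤ Type)
    (ar : pos.Elementsᵒᵖ ⥤ e ⥤ Type) (G : (e ⥤ Type) ⥤ d ⥤ Type) :
    famApply pos ar ⟶ G ⋙ famApply pos (ar ⋙ G) where
  app X :=
    { app := fun C => TypeCat.ofHom fun x => ⟨x.1, G.map x.2⟩
      naturality := by
        intro C C' f
        ext x
        show (⟨pos.map f x.1, G.map (ar.map (elHom pos f x.1).op ≫ x.2)⟩ :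
            Σ I : pos.obj C', (ar ⋙ G).obj (op (pos.elementsMk C' I)) ⟶ G.obj X)
          = ⟨pos.map f x.1, G.map (ar.map (elHom pos f x.1).op) ≫ G.map x.2⟩
        rw [G.map_comp] }
  naturality := by
    intro X Y t
    apply NatTrans.ext
    funext C; ext x
    show (⟨x.1, G.map (x.2 ≫ t)⟩ :
        Σ I : pos.obj C, (ar ⋙ G).obj (op (pos.elementsMk C I)) ⟶ G.obj Y)
      = ⟨x.1, G.map x.2 ≫ G.map t⟩
    rw [G.map_comp]

section Statement1

variable {c d : Type} [SmallCategory c] [SmallCategory d]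
  (m : Monad (c ⥤ Type)) (p : (c ⥤ Type) ⥤ d ⥤ Type)
  (posp : d ⥤ Type) (arp : posp.Elementsᵒᵖ ⥤ c ⥤ Type)

def pm : (c ⥤ Type) ⥤ d ⥤ Type :=
  (m : (c ⥤ Type) ⥤ c ⥤ Type) ⋙ p

/-- The right coclosure `⌈p / p ∘ m⌉` : the familial endofunctor of `d ⥤ Type` with the same
positions `p(1) = posp` as `p` and with arity `p (m (p[I]))` at the position `I`;
this is the left Kan extension of `p` along `p ∘ m`. -/
def coclosurePPM : (d ⥤ Type) ⥤ d ⥤ Type :=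
  famApply posp (arp ⋙ pm m p)

def coclosureUnitP (ep : famApply posp arp ≅ p) : p ⟶ pm m p ⋙ coclosurePPM m p posp arp :=
  ep.inv ≫ coclosureUnit posp arp (pm m p)

section KanComonad

variable {C D : Type*} [Category C] [Category D] (T : Monad C) (P : C ⥤ D) (K : D ⥤ D)
  (ζ : P ⟶ (T.toFunctor ⋙ P) ⋙ K) [K.IsLeftKanExtension ζ]

noncomputable def kanCounit : K ⟶ 𝟭 D :=
  K.descOfIsLeftKanExtension ζ (𝟭 D)
    ((Functor.leftUnitor P).inv ≫ Functor.whiskerRight T.η P ≫ (Functor.rightUnitor _).inv)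

noncomputable def kanComult : K ⟶ K ⋙ K :=
  K.descOfIsLeftKanExtension ζ (K ⋙ K)
    (ζ ≫ Functor.whiskerRight (Functor.whiskerLeft T.toFunctor ζ) K ≫
      Functor.whiskerRight (Functor.whiskerRight T.μ P) (K ⋙ K))

lemma kanCounit_fac_app (X : C) :
    ζ.app X ≫ (kanCounit T P K ζ).app (P.obj (T.obj X)) = P.map (T.η.app X) :=
  (K.descOfIsLeftKanExtension_fac_app ζ _ _ X).trans (by simp)

lemma kanComult_fac_app (X : C) :
    ζ.app X ≫ (kanComult T P K ζ).app (P.obj (T.obj X)) =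
      ζ.app X ≫ K.map (ζ.app (T.obj X)) ≫ K.map (K.map (P.map (T.μ.app X))) :=
  (K.descOfIsLeftKanExtension_fac_app ζ _ _ X).trans (by simp)

lemma kanComult_app_comp_kanCounit_app (Y : D) :
    (kanComult T P K ζ).app Y ≫ (kanCounit T P K ζ).app (K.obj Y) = 𝟙 (K.obj Y) := by
  suffices h : kanComult T P K ζ ≫ Functor.whiskerLeft K (kanCounit T P K ζ) = 𝟙 K from
    NatTrans.congr_app h Y
  apply K.hom_ext_of_isLeftKanExtension ζ
  ext X
  simp [reassoc_of% (kanComult_fac_app T P K ζ), reassoc_of% (kanCounit_fac_app T P K ζ),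
    ← Functor.map_comp]

lemma app_comp_map_comp_kanCounit_app (X : C) :
    ζ.app (T.obj X) ≫ K.map (P.map (T.μ.app X)) ≫ (kanCounit T P K ζ).app (P.obj (T.obj X)) =
      𝟙 _ := by
  simp [reassoc_of% (kanCounit_fac_app T P K ζ), ← Functor.map_comp]

lemma kanComult_app_comp_map_kanCounit_app (Y : D) :
    (kanComult T P K ζ).app Y ≫ K.map ((kanCounit T P K ζ).app Y) = 𝟙 (K.obj Y) := by
  suffices h : kanComult T P K ζ ≫ Functor.whiskerRight (kanCounit T P K ζ) K = 𝟙 K from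
    NatTrans.congr_app h Y
  apply K.hom_ext_of_isLeftKanExtension ζ
  ext X
  simp only [NatTrans.comp_app, Functor.whiskerLeft_app, Functor.whiskerRight_app,
    NatTrans.id_app, Functor.comp_obj, reassoc_of% (kanComult_fac_app T P K ζ)]
  rw [← K.map_comp, ← K.map_comp, app_comp_map_comp_kanCounit_app, K.map_id, Category.comp_id]

lemma app_comp_map_comp_kanComult_app (X : C) :
    ζ.app (T.obj X) ≫ K.map (P.map (T.μ.app X)) ≫ (kanComult T P K ζ).app (P.obj (T.obj X)) =
      ζ.app (T.obj X) ≫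
        K.map (P.map (T.μ.app X) ≫ ζ.app (T.obj X) ≫ K.map (P.map (T.μ.app X))) := by
  have hζ : P.map (T.μ.app X) ≫ ζ.app (T.obj X) =
      ζ.app (T.obj (T.obj X)) ≫ K.map (P.map (T.map (T.μ.app X))) :=
    ζ.naturality (T.μ.app X)
  rw [NatTrans.naturality]
  dsimp only [Functor.comp_obj, Functor.comp_map]
  rw [reassoc_of% (kanComult_fac_app T P K ζ), reassoc_of% hζ]
  simp only [Functor.map_comp]
  simp only [← Functor.map_comp, T.assoc]

lemma kanComult_coassoc (Y : D) :
    (kanComult T P K ζ).app Y ≫ K.map ((kanComult T P K ζ).app Y) =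
      (kanComult T P K ζ).app Y ≫ (kanComult T P K ζ).app (K.obj Y) := by
  suffices h : kanComult T P K ζ ≫ Functor.whiskerRight (kanComult T P K ζ) K =
      kanComult T P K ζ ≫ Functor.whiskerLeft K (kanComult T P K ζ) from
    NatTrans.congr_app h Y
  apply K.hom_ext_of_isLeftKanExtension ζ
  ext X
  simp only [NatTrans.comp_app, Functor.whiskerLeft_app, Functor.whiskerRight_app,
    Functor.comp_obj, reassoc_of% (kanComult_fac_app T P K ζ)]
  have hL : K.map (ζ.app (T.obj X)) ≫ K.map (K.map (P.map (T.μ.app X))) ≫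
      K.map ((kanComult T P K ζ).app (P.obj (T.obj X))) =
      K.map (ζ.app (T.obj X) ≫
        K.map (P.map (T.μ.app X) ≫ ζ.app (T.obj X) ≫ K.map (P.map (T.μ.app X)))) := by
    rw [← app_comp_map_comp_kanComult_app, K.map_comp, K.map_comp]
  have hR : K.map (ζ.app (T.obj X)) ≫ K.map (K.map (P.map (T.μ.app X))) ≫
      (kanComult T P K ζ).app (K.obj (P.obj (T.obj X))) =
      (kanComult T P K ζ).app (P.obj (T.obj X)) ≫
        K.map (K.map (ζ.app (T.obj X) ≫ K.map (P.map (T.μ.app X)))) := by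
    rw [← K.map_comp_assoc, NatTrans.naturality]
    rfl
  rw [hL, hR, reassoc_of% (kanComult_fac_app T P K ζ)]
  simp only [Functor.map_comp]

noncomputable def kanComonad : Comonad D where
  toFunctor := K
  ε := kanCounit T P K ζ
  δ := kanComult T P K ζ
  coassoc := kanComult_coassoc T P K ζ
  left_counit := kanComult_app_comp_kanCounit_app T P K ζ
  right_counit := kanComult_app_comp_map_kanCounit_app T P K ζ

end KanComonad

section Coclosure

variable {e : Type} [SmallCategory e] {pos : c ⥤ Type}

def genericElement (ar : pos.Elementsᵒᵖ ⥤ d ⥤ Type) {C : c} (I : pos.obj C) :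
    ((famApply pos ar).obj (ar.obj (op (pos.elementsMk C I)))).obj C :=
  ⟨I, 𝟙 _⟩

lemma natTrans_app_mk_eq {ar : pos.Elementsᵒᵖ ⥤ d ⥤ Type} {S : (d ⥤ Type) ⥤ c ⥤ Type}
    (η : famApply pos ar ⟶ S) {X : d ⥤ Type} {C : c}
    (I : pos.obj C) (g : ar.obj (op (pos.elementsMk C I)) ⟶ X) :
    (η.app X).app C ⟨I, g⟩ = (S.map g).app C ((η.app _).app C (genericElement ar I)) :=
  ConcreteCategory.congr_hom (NatTrans.congr_app (η.naturality g) C) (genericElement ar I)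

lemma natTrans_genericElement_map {ar : pos.Elementsᵒᵖ ⥤ d ⥤ Type}
    {S : (d ⥤ Type) ⥤ c ⥤ Type} (η : famApply pos ar ⟶ S) {C C' : c} (f : C ⟶ C')
    (I : pos.obj C) :
    (S.obj _).map f ((η.app _).app C (genericElement ar I)) =
      (S.map (ar.map (elHom pos f I).op)).app C'
        ((η.app _).app C' (genericElement ar (pos.map f I))) := by
  rw [← natTrans_app_mk_eq]
  exact (ConcreteCategory.congr_hom ((η.app _).naturality f) (genericElement ar I)).symm

variable (ar : pos.Elementsᵒᵖ ⥤ e ⥤ Type) (G : (e ⥤ Type) ⥤ d ⥤ Type)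
  {R : (d ⥤ Type) ⥤ c ⥤ Type}

def coclosureDesc (θ : famApply pos ar ⟶ G ⋙ R) : famApply pos (ar ⋙ G) ⟶ R where
  app Y :=
    { app := fun C => TypeCat.ofHom fun x =>
        (R.map x.2).app C ((θ.app _).app C (genericElement ar x.1))
      naturality := by
        intro C C' f
        apply ConcreteCategory.hom_ext
        rintro ⟨I, u⟩
        have hθ := natTrans_genericElement_map θ f I
        dsimp only [Functor.comp_obj, Functor.comp_map] at hθ
        show (R.map ((ar ⋙ G).map (elHom pos f I).op ≫ u)).app C'
            ((θ.app _).app C' (genericElement ar (pos.map f I))) =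
          (R.obj Y).map f ((R.map u).app C ((θ.app _).app C (genericElement ar I)))
        calc _ = (R.map u).app C' ((R.map (G.map (ar.map (elHom pos f I).op))).app C'
                ((θ.app _).app C' (genericElement ar (pos.map f I)))) := by
              rw [Functor.map_comp]; rfl
          _ = (R.map u).app C' ((R.obj (G.obj (ar.obj _))).map f
                ((θ.app _).app C (genericElement ar I))) := by rw [hθ]
          _ = _ := NatTrans.naturality_apply (R.map u) f _ }
  naturality := by
    intro Y Y' t
    apply NatTrans.ext; funext C
    apply ConcreteCategory.hom_ext
    rintro ⟨I, u⟩
    show (R.map (u ≫ t)).app C _ = (R.map t).app C ((R.map u).app C _)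
    rw [Functor.map_comp]
    rfl

lemma coclosureUnit_comp_coclosureDesc (θ : famApply pos ar ⟶ G ⋙ R) :
    coclosureUnit pos ar G ≫ Functor.whiskerLeft G (coclosureDesc ar G θ) = θ := by
  apply NatTrans.ext; funext X
  apply NatTrans.ext; funext C
  apply ConcreteCategory.hom_ext
  rintro ⟨I, g⟩
  exact (natTrans_app_mk_eq θ I g).symm

lemma coclosureUnit_app_genericElement {C : c} (I : pos.obj C) :
    ((coclosureUnit pos ar G).app _).app C (genericElement ar I) =
      genericElement (ar ⋙ G) I := by
  show (⟨I, G.map (𝟙 _)⟩ : ((famApply pos (ar ⋙ G)).obj _).obj C) = ⟨I, 𝟙 _⟩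
  rw [G.map_id]; rfl

lemma coclosure_hom_ext {α β : famApply pos (ar ⋙ G) ⟶ R}
    (h : coclosureUnit pos ar G ≫ Functor.whiskerLeft G α =
      coclosureUnit pos ar G ≫ Functor.whiskerLeft G β) :
    α = β := by
  apply NatTrans.ext; funext Y
  apply NatTrans.ext; funext C
  apply ConcreteCategory.hom_ext
  rintro ⟨I, u⟩
  have hI := ConcreteCategory.congr_hom (NatTrans.congr_app (NatTrans.congr_app h _) C)
    (genericElement ar I)
  simp only [NatTrans.comp_app, Functor.whiskerLeft_app, ConcreteCategory.comp_apply,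
    coclosureUnit_app_genericElement] at hI
  rw [natTrans_app_mk_eq α, natTrans_app_mk_eq β]
  exact congrArg _ hI

instance isLeftKanExtension_coclosureUnit :
    (famApply pos (ar ⋙ G)).IsLeftKanExtension (coclosureUnit pos ar G) :=
  ⟨⟨IsInitial.ofUniqueHom
    (fun E => StructuredArrow.homMk (coclosureDesc ar G E.hom)
      (coclosureUnit_comp_coclosureDesc ar G E.hom))
    (fun E φ => StructuredArrow.ext _ _ (coclosure_hom_ext ar G
      ((StructuredArrow.w φ).trans (coclosureUnit_comp_coclosureDesc ar G E.hom).symm)))⟩⟩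

lemma isLeftKanExtension_inv_comp_coclosureUnit {F : (e ⥤ Type) ⥤ c ⥤ Type}
    (i : famApply pos ar ≅ F) :
    (famApply pos (ar ⋙ G)).IsLeftKanExtension (i.inv ≫ coclosureUnit pos ar G) :=
  (Functor.isLeftKanExtension_iff_of_iso₂ (coclosureUnit pos ar G)
    (i.inv ≫ coclosureUnit pos ar G) i (Iso.refl _) (by simp)).mp inferInstance

end Coclosure

theorem coclosure_comonad
    (ep : famApply posp arp ≅ p) :
    ∃ (ε : coclosurePPM m p posp arp ⟶ 𝟭 (d ⥤ Type))
      (δ : coclosurePPM m p posp arp ⟶ coclosurePPM m p posp arp ⋙ coclosurePPM m p posp arp),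
      -- comonad laws
      (∀ Y : d ⥤ Type, δ.app Y ≫ (coclosurePPM m p posp arp).map (δ.app Y) =
        δ.app Y ≫ δ.app ((coclosurePPM m p posp arp).obj Y)) ∧
      (∀ Y : d ⥤ Type,
        δ.app Y ≫ ε.app ((coclosurePPM m p posp arp).obj Y) =
          𝟙 ((coclosurePPM m p posp arp).obj Y)) ∧
      (∀ Y : d ⥤ Type,
        δ.app Y ≫ (coclosurePPM m p posp arp).map (ε.app Y) =
          𝟙 ((coclosurePPM m p posp arp).obj Y)) ∧
      -- the counit corresponds, under the coclosure universal property, to the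
      -- whiskering of the unit of `m` with `p`
      (∀ X : c ⥤ Type,
        (coclosureUnitP m p posp arp ep).app X ≫ ε.app ((pm m p).obj X) =
          p.map (m.η.app X)) ∧
      -- the comultiplication corresponds to the transformation induced by the
      -- multiplication of `m`
      (∀ X : c ⥤ Type,
        (coclosureUnitP m p posp arp ep).app X ≫ δ.app ((pm m p).obj X) =
          (coclosureUnitP m p posp arp ep).app X ≫
            (coclosurePPM m p posp arp).map
              ((coclosureUnitP m p posp arp ep).app ((m : (c ⥤ Type) ⥤ c ⥤ Type).obj X)) ≫
            (coclosurePPM m p posp arp).map ((coclosurePPM m p posp arp).map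
              (p.map (m.μ.app X)))) := by
  have : (coclosurePPM m p posp arp).IsLeftKanExtension (L := m.toFunctor ⋙ p)
      (coclosureUnitP m p posp arp ep) :=
    isLeftKanExtension_inv_comp_coclosureUnit arp (pm m p) ep
  let L := kanComonad m p (coclosurePPM m p posp arp) (coclosureUnitP m p posp arp ep)
  exact ⟨L.ε, L.δ, L.coassoc, L.left_counit, L.right_counit,
    kanCounit_fac_app m p _ (coclosureUnitP m p posp arp ep),
    kanComult_fac_app m p _ (coclosureUnitP m p posp arp ep)⟩

end Statement1

end Fam
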